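/- Let A and B be finite Hopf C*-algebras and ⟨·,·⟩ : A × B → ℂ a non-degenerate bilinear form satisfying only the first three pairing axioms: ⟨Δ_A(a), b₁⊗b₂⟩ = ⟨a, b₁b₂⟩, ⟨a₁⊗a₂, Δ_B(b)⟩ = ⟨a₁a₂, b⟩, and ⟨a*, b⟩ = conj⟨a, S_B(b)*⟩. Then the antipode axiom follows automatically: ⟨S_A(a), b⟩ = ⟨a, S_B(b)⟩ for all a ∈ A, b ∈ B. -/

import Mathlib

/-!
Extend bilinear forms `A × B → ℂ` to functionals on the coalgebra `A ⊗ B` and multiply them by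
convolution. The first two pairing axioms say that `a ↦ ⟨a, ·⟩` and `b ↦ ⟨·, b⟩` are
multiplicative into the convolution algebras of `B` and of `A`; together with non-degeneracy this
forces `⟨1, ·⟩ = ε_B` and `⟨·, 1⟩ = ε_A`. The antipode axioms of `A` and `B` then make
`(a, b) ↦ ⟨S a, b⟩` a left and `(a, b) ↦ ⟨a, S b⟩` a right convolution inverse of `⟨·, ·⟩`, so the
two coincide by associativity of convolution.
-/

noncomputable section
open scoped TensorProduct
open TensorProduct LinearMap

namespace QD

/-! ### Componentwise star on tensor products of star modules over `ℂ` -/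

section StarTensor

variable (A B : Type*) [AddCommGroup A] [AddCommGroup B] [Module ℂ A] [Module ℂ B]
  [StarAddMonoid A] [StarAddMonoid B] [StarModule ℂ A] [StarModule ℂ B]

/-- The componentwise star on a tensor product of star modules over `ℂ`. -/
def starAddHom : A ⊗[ℂ] B →+ A ⊗[ℂ] B :=
  TensorProduct.liftAddHom
    { toFun := fun a =>
        { toFun := fun b => star a ⊗ₜ[ℂ] star b
          map_zero' := by simp
          map_add' := fun b₁ b₂ => by simp [star_add, TensorProduct.tmul_add] }
      map_zero' := by ext b; simp
      map_add' := fun a₁ a₂ => by ext b; simp [star_add, TensorProduct.add_tmul] }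
    fun c a b => by simp [star_smul, TensorProduct.smul_tmul]

instance : StarAddMonoid (A ⊗[ℂ] B) where
  star x := starAddHom A B x
  star_involutive x := by
    show starAddHom A B (starAddHom A B x) = x
    induction x using TensorProduct.induction_on with
    | zero => simp
    | tmul a b => simp [starAddHom]
    | add x y hx hy => rw [map_add, map_add, hx, hy]
  star_add x y := (starAddHom A B).map_add x y

variable {A B}

lemma star_def (x : A ⊗[ℂ] B) : star x = starAddHom A B x := rfl

@[simp] lemma star_tmul (a : A) (b : B) :
    star (a ⊗ₜ[ℂ] b) = (star a) ⊗ₜ[ℂ] (star b) := by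
  simp [star_def, starAddHom]

variable (A B)

instance : StarModule ℂ (A ⊗[ℂ] B) where
  star_smul c x := by
    induction x using TensorProduct.induction_on with
    | zero => rw [smul_zero, star_def, map_zero, smul_zero]
    | tmul a b => rw [TensorProduct.smul_tmul', star_tmul, star_tmul, star_smul,
        TensorProduct.smul_tmul']
    | add x y hx hy =>
      simp only [smul_add, star_def, map_add] at hx hy ⊢
      rw [hx, hy]

end StarTensor

/-! ### Finite Hopf C*-algebras -/

/-- A finite Hopf C*-algebra structure on a finite-dimensional C*-algebra `A`:
a comultiplication, counit and antipode satisfying the Hopf algebra axioms,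
such that the comultiplication and counit are *-homomorphisms and the antipode
satisfies `S(S(a)*)* = a` (and consequently `S² = id`). -/
structure FiniteHopfCStar (A : Type*) [NormedRing A] [StarRing A] [CStarRing A]
    [NormedAlgebra ℂ A] [StarModule ℂ A] [FiniteDimensional ℂ A] where
  /-- The comultiplication. -/
  comul : A →ₗ[ℂ] A ⊗[ℂ] A
  /-- The counit. -/
  counit : A →ₗ[ℂ] ℂ
  /-- The antipode. -/
  antipode : A →ₗ[ℂ] A
  coassoc : ∀ a : A,
    (TensorProduct.assoc ℂ A A A) (LinearMap.rTensor A comul (comul a)) =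
      LinearMap.lTensor A comul (comul a)
  counit_comul : ∀ a : A, (TensorProduct.lid ℂ A) (LinearMap.rTensor A counit (comul a)) = a
  comul_counit : ∀ a : A, (TensorProduct.rid ℂ A) (LinearMap.lTensor A counit (comul a)) = a
  comul_one : comul 1 = 1
  comul_mul : ∀ a b : A, comul (a * b) = comul a * comul b
  counit_one : counit 1 = 1
  counit_mul : ∀ a b : A, counit (a * b) = counit a * counit b
  comul_star : ∀ a : A, comul (star a) = star (comul a)
  counit_star : ∀ a : A, counit (star a) = star (counit a)
  mul_antipode_rTensor_comul : ∀ a : A,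
    LinearMap.mul' ℂ A (LinearMap.rTensor A antipode (comul a)) = counit a • 1
  mul_antipode_lTensor_comul : ∀ a : A,
    LinearMap.mul' ℂ A (LinearMap.lTensor A antipode (comul a)) = counit a • 1
  star_antipode_star_antipode : ∀ a : A, star (antipode (star (antipode a))) = a
  antipode_antipode : ∀ a : A, antipode (antipode a) = a

/-! ### Pairings -/

section Pairing

variable {A B : Type*} [AddCommGroup A] [AddCommGroup B] [Module ℂ A] [Module ℂ B]

/-- The extension of a bilinear pairing `A × B → ℂ` to `(A ⊗ A) × (B ⊗ B) → ℂ`,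
`⟨a₁ ⊗ a₂, b₁ ⊗ b₂⟩ = ⟨a₁, b₁⟩ ⟨a₂, b₂⟩`. -/
def pairT (p : A →ₗ[ℂ] B →ₗ[ℂ] ℂ) :
    A ⊗[ℂ] A →ₗ[ℂ] Module.Dual ℂ (B ⊗[ℂ] B) :=
  TensorProduct.dualDistrib ℂ B B ∘ₗ TensorProduct.map p p

/-- Non-degeneracy of a bilinear pairing. -/
def Nondegenerate (p : A →ₗ[ℂ] B →ₗ[ℂ] ℂ) : Prop :=
  (∀ a : A, (∀ b : B, p a b = 0) → a = 0) ∧ (∀ b : B, (∀ a : A, p a b = 0) → b = 0)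

end Pairing

section Main

variable {A B : Type*}
  [NormedRing A] [StarRing A] [CStarRing A] [NormedAlgebra ℂ A] [StarModule ℂ A]
  [FiniteDimensional ℂ A]
  [NormedRing B] [StarRing B] [CStarRing B] [NormedAlgebra ℂ B] [StarModule ℂ B]
  [FiniteDimensional ℂ B]

variable (hA : FiniteHopfCStar A) (hB : FiniteHopfCStar B) (p : A →ₗ[ℂ] B →ₗ[ℂ] ℂ)

/-- A pairing of finite Hopf C*-algebras. -/
structure IsHopfPairing : Prop where
  pair_comul : ∀ (a : A) (b₁ b₂ : B), pairT p (hA.comul a) (b₁ ⊗ₜ[ℂ] b₂) = p a (b₁ * b₂)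
  pair_mul : ∀ (a₁ a₂ : A) (b : B), pairT p.flip (hB.comul b) (a₁ ⊗ₜ[ℂ] a₂) = p (a₁ * a₂) b
  pair_star : ∀ (a : A) (b : B), p (star a) b = starRingEnd ℂ (p a (star (hB.antipode b)))
  pair_one_right : ∀ a : A, p a 1 = hA.counit a
  pair_one_left : ∀ b : B, p 1 b = hB.counit b
  pair_antipode : ∀ (a : A) (b : B), p (hA.antipode a) b = p a (hB.antipode b)

/-- `a ▷ b = Σ b₍₁₎ ⟨a, b₍₂₎⟩`, the left action of `A` on `B`. -/
def lact (a : A) (b : B) : B :=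
  TensorProduct.rid ℂ B ((LinearMap.lTensor B (p a)) (hB.comul b))

/-- `b ◁ a = Σ ⟨a, b₍₁₎⟩ b₍₂₎`, the right action of `A` on `B`. -/
def ract (b : B) (a : A) : B :=
  TensorProduct.lid ℂ B ((LinearMap.rTensor B (p a)) (hB.comul b))

/-- `b ▷ a = Σ a₍₁₎ ⟨a₍₂₎, b⟩`, the left action of `B` on `A`. -/
def lact' (b : B) (a : A) : A :=
  TensorProduct.rid ℂ A ((LinearMap.lTensor A (p.flip b)) (hA.comul a))

/-- `a ◁ b = Σ ⟨a₍₁₎, b⟩ a₍₂₎`, the right action of `B` on `A`. -/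
def ract' (a : A) (b : B) : A :=
  TensorProduct.lid ℂ A ((LinearMap.rTensor A (p.flip b)) (hA.comul a))

end Main

end QD

namespace QD

section Triples

variable {X : Type*} [NormedRing X] [StarRing X] [CStarRing X] [NormedAlgebra ℂ X]
  [StarModule ℂ X] [FiniteDimensional ℂ X]

/-- The iterated comultiplication `x ↦ Σ x₍₁₎ ⊗ (x₍₂₎ ⊗ x₍₃₎)`. -/
def comul3 (h : FiniteHopfCStar X) : X →ₗ[ℂ] X ⊗[ℂ] (X ⊗[ℂ] X) :=
  LinearMap.lTensor X h.comul ∘ₗ h.comul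

end Triples

section Rot

variable (X : Type*) [AddCommGroup X] [Module ℂ X]

/-- The rearrangement `x₁ ⊗ (x₂ ⊗ x₃) ↦ (x₃ ⊗ x₁) ⊗ x₂`. -/
def rot31 : X ⊗[ℂ] (X ⊗[ℂ] X) →ₗ[ℂ] (X ⊗[ℂ] X) ⊗[ℂ] X :=
  (TensorProduct.comm ℂ X (X ⊗[ℂ] X)).toLinearMap
    ∘ₗ (TensorProduct.assoc ℂ X X X).toLinearMap
    ∘ₗ (TensorProduct.comm ℂ X (X ⊗[ℂ] X)).toLinearMap

/-- The rearrangement `x₁ ⊗ (x₂ ⊗ x₃) ↦ (x₁ ⊗ x₃) ⊗ x₂`. -/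
def rot13 : X ⊗[ℂ] (X ⊗[ℂ] X) →ₗ[ℂ] (X ⊗[ℂ] X) ⊗[ℂ] X :=
  (TensorProduct.assoc ℂ X X X).symm.toLinearMap
    ∘ₗ LinearMap.lTensor X (TensorProduct.comm ℂ X X).toLinearMap

/-- Collapsing scalar factors `(c₁ ⊗ c₂) ⊗ m ↦ (c₁ * c₂) • m`. -/
def collapse : (ℂ ⊗[ℂ] ℂ) ⊗[ℂ] X →ₗ[ℂ] X :=
  (TensorProduct.lid ℂ X).toLinearMap
    ∘ₗ LinearMap.rTensor X (TensorProduct.lid ℂ ℂ).toLinearMap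

end Rot

section Double

variable {A B : Type*}
  [NormedRing A] [StarRing A] [CStarRing A] [NormedAlgebra ℂ A] [StarModule ℂ A]
  [FiniteDimensional ℂ A]
  [NormedRing B] [StarRing B] [CStarRing B] [NormedAlgebra ℂ B] [StarModule ℂ B]
  [FiniteDimensional ℂ B]

variable (hA : FiniteHopfCStar A) (hB : FiniteHopfCStar B) (p : A →ₗ[ℂ] B →ₗ[ℂ] ℂ)

/-- Contraction `((b₃ ⊗ b₁) ⊗ b₂) ⊗ ((a₁ ⊗ a₃) ⊗ a₂) ↦ ⟨a₁, S_B b₃⟩ ⟨a₃, b₁⟩ (a₂ ⊗ b₂)`. -/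
def mulAux : ((B ⊗[ℂ] B) ⊗[ℂ] B) ⊗[ℂ] ((A ⊗[ℂ] A) ⊗[ℂ] A) →ₗ[ℂ] A ⊗[ℂ] B :=
  collapse (A ⊗[ℂ] B)
    ∘ₗ TensorProduct.map
        (TensorProduct.map (TensorProduct.lift (p.flip ∘ₗ hB.antipode))
          (TensorProduct.lift p.flip))
        (TensorProduct.comm ℂ B A).toLinearMap
    ∘ₗ LinearMap.rTensor (B ⊗[ℂ] A)
        (TensorProduct.tensorTensorTensorComm ℂ B B A A).toLinearMap
    ∘ₗ (TensorProduct.tensorTensorTensorComm ℂ (B ⊗[ℂ] B) B (A ⊗[ℂ] A) A).toLinearMap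

/-- The middle part of the quantum double multiplication:
`b ⊗ a' ↦ Σ ⟨a'₍₁₎, S_B⁻¹ b₍₃₎⟩ ⟨a'₍₃₎, b₍₁₎⟩ (a'₍₂₎ ⊗ b₍₂₎)` (recall `S_B⁻¹ = S_B`). -/
def mdMid : B ⊗[ℂ] A →ₗ[ℂ] A ⊗[ℂ] B :=
  mulAux hB p ∘ₗ
    TensorProduct.map (rot31 B ∘ₗ comul3 hB) (rot13 A ∘ₗ comul3 hA)

/-- The multiplication of the quantum double `D(A,B)`:
`(a ⊗ b) (a' ⊗ b') = Σ ⟨a'₍₁₎, S_B⁻¹ b₍₃₎⟩ ⟨a'₍₃₎, b₍₁₎⟩ (a a'₍₂₎ ⊗ b₍₂₎ b')`. -/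
def mD : (A ⊗[ℂ] B) ⊗[ℂ] (A ⊗[ℂ] B) →ₗ[ℂ] A ⊗[ℂ] B :=
  (LinearMap.mul' ℂ (A ⊗[ℂ] B) ∘ₗ
      LinearMap.rTensor (A ⊗[ℂ] B)
        (Algebra.TensorProduct.includeLeft : A →ₐ[ℂ] A ⊗[ℂ] B).toLinearMap)
    ∘ₗ LinearMap.lTensor A
        ((LinearMap.mul' ℂ (A ⊗[ℂ] B) ∘ₗ
            LinearMap.lTensor (A ⊗[ℂ] B)
              (Algebra.TensorProduct.includeRight : B →ₐ[ℂ] A ⊗[ℂ] B).toLinearMap)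
          ∘ₗ LinearMap.rTensor B (mdMid hA hB p))
    ∘ₗ LinearMap.lTensor A (TensorProduct.assoc ℂ B A B).symm.toLinearMap
    ∘ₗ (TensorProduct.assoc ℂ A B (A ⊗[ℂ] B)).toLinearMap

/-- The comultiplication of the quantum double. -/
def ΔD : A ⊗[ℂ] B →ₗ[ℂ] (A ⊗[ℂ] B) ⊗[ℂ] (A ⊗[ℂ] B) :=
  (TensorProduct.tensorTensorTensorComm ℂ A A B B).toLinearMap
    ∘ₗ TensorProduct.map hA.comul hB.comul

/-- The tensor product of two linear functionals, as a functional on the tensor product. -/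
def funcT (φA : A →ₗ[ℂ] ℂ) (φB : B →ₗ[ℂ] ℂ) : A ⊗[ℂ] B →ₗ[ℂ] ℂ :=
  (TensorProduct.lid ℂ ℂ).toLinearMap ∘ₗ TensorProduct.map φA φB

/-- The counit of the quantum double. -/
def εD : A ⊗[ℂ] B →ₗ[ℂ] ℂ := funcT hA.counit hB.counit

/-- The antipode of the quantum double:
`S_D (a ⊗ b) = Σ ⟨a₍₁₎, S_B b₍₃₎⟩ ⟨a₍₃₎, b₍₁₎⟩ (S_A a₍₂₎ ⊗ S_B b₍₂₎)`. -/
def SD : A ⊗[ℂ] B →ₗ[ℂ] A ⊗[ℂ] B :=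
  TensorProduct.map hA.antipode hB.antipode ∘ₗ mdMid hA hB p
    ∘ₗ (TensorProduct.comm ℂ A B).toLinearMap

/-- Contraction `(u₁ ⊗ (u₂ ⊗ u₃)) ⊗ (v₁ ⊗ (v₂ ⊗ v₃)) ↦ ⟨u₃, v₁⟩ ⟨u₁, v₃⟩ (u₂ ⊗ v₂)`. -/
def starContract : (A ⊗[ℂ] (A ⊗[ℂ] A)) ⊗[ℂ] (B ⊗[ℂ] (B ⊗[ℂ] B)) →ₗ[ℂ] A ⊗[ℂ] B :=
  collapse (A ⊗[ℂ] B)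
    ∘ₗ LinearMap.rTensor (A ⊗[ℂ] B)
        (TensorProduct.map (TensorProduct.lift p) (TensorProduct.lift p))
    ∘ₗ LinearMap.rTensor (A ⊗[ℂ] B)
        (TensorProduct.tensorTensorTensorComm ℂ A A B B).toLinearMap
    ∘ₗ (TensorProduct.tensorTensorTensorComm ℂ (A ⊗[ℂ] A) A (B ⊗[ℂ] B) B).toLinearMap
    ∘ₗ TensorProduct.map (rot31 A) (rot13 B)

/-- The involution of the quantum double:
`(a ⊗ b)* = Σ ⟨a₍₃₎*, b₍₁₎*⟩ ⟨a₍₁₎*, (S_B b₍₃₎)*⟩ (a₍₂₎* ⊗ b₍₂₎*)`,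
extended conjugate-linearly. -/
def starD (x : A ⊗[ℂ] B) : A ⊗[ℂ] B :=
  starContract p
    (star ((TensorProduct.map (comul3 hA)
        (LinearMap.lTensor B (LinearMap.lTensor B hB.antipode) ∘ₗ comul3 hB)) x))

/-- The composite of `starD` with the componentwise star, a linear map. -/
def starDbar : A ⊗[ℂ] B →ₗ[ℂ] A ⊗[ℂ] B where
  toFun x := star (starD hA hB p x)
  map_add' x y := by
    simp only [starD]
    simp only [map_add, star_def]
  map_smul' c x := by
    simp only [starD, map_smul, star_smul, RingHom.id_apply, starRingEnd_apply, star_star]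

end Double

end QD

namespace QD

namespace FiniteHopfCStar

variable {X : Type*} [NormedRing X] [StarRing X] [CStarRing X] [NormedAlgebra ℂ X]
  [StarModule ℂ X] [FiniteDimensional ℂ X]

abbrev toCoalgebra (h : FiniteHopfCStar X) : Coalgebra ℂ X where
  comul := h.comul
  counit := h.counit
  coassoc := LinearMap.ext h.coassoc
  rTensor_counit_comp_comul := LinearMap.ext fun x =>
    (TensorProduct.lid ℂ X).injective (by simpa using h.counit_comul x)
  lTensor_counit_comp_comul := LinearMap.ext fun x =>
    (TensorProduct.rid ℂ X).injective (by simpa using h.comul_counit x)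

end FiniteHopfCStar

open Coalgebra WithConv

section Convolution

variable {R M N : Type*} [CommRing R] [AddCommGroup M] [Module R M] [AddCommGroup N] [Module R N]

lemma dualDistrib_tmul_eq_mul'_comp_map (φ ψ : N →ₗ[R] R) :
    dualDistrib R N N (φ ⊗ₜ ψ) = mul' R R ∘ₗ TensorProduct.map φ ψ :=
  TensorProduct.ext' fun _ _ => by simp

lemma dualDistrib_map_apply_tmul (f g : M →ₗ[R] N →ₗ[R] R) (u : M ⊗[R] M) (n₁ n₂ : N) :
    dualDistrib R N N (TensorProduct.map f g u) (n₁ ⊗ₜ n₂) =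
      mul' R R (TensorProduct.map (f.flip n₁) (g.flip n₂) u) := by
  induction u using TensorProduct.induction_on with
  | zero => simp
  | tmul x y => simp
  | add u v hu hv => simp only [map_add, LinearMap.add_apply, hu, hv]

lemma convMul_lift_tmul [CoalgebraStruct R M] [CoalgebraStruct R N]
    (f g : M →ₗ[R] N →ₗ[R] R) (m : M) (n : N) :
    (toConv (TensorProduct.lift f) * toConv (TensorProduct.lift g)) (m ⊗ₜ n) =
      dualDistrib R N N (TensorProduct.map f g (comul m)) (comul n) := by
  rw [convMul_apply, TensorProduct.comul_tmul]
  induction comul (R := R) m using TensorProduct.induction_on with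
  | zero => simp
  | tmul x₁ x₂ =>
    induction comul (R := R) n using TensorProduct.induction_on with
    | zero => simp
    | tmul y₁ y₂ => simp
    | add u v hu hv => simp only [TensorProduct.tmul_add, map_add, hu, hv]
  | add u v hu hv => simp only [TensorProduct.add_tmul, map_add, LinearMap.add_apply, hu, hv]

lemma apply_lid_rTensor_comul [CoalgebraStruct R N] (φ ψ : N →ₗ[R] R) (n : N) :
    ψ (TensorProduct.lid R N (rTensor N φ (comul n))) = (toConv φ * toConv ψ) n := by
  rw [convMul_apply]
  induction comul (R := R) n using TensorProduct.induction_on with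
  | zero => simp
  | tmul x y => simp
  | add u v hu hv => simp only [map_add, hu, hv]

lemma toConv_mul_toConv_of_dualDistrib {A : Type*} [Ring A] [Module R A] [CoalgebraStruct R N]
    (p : A →ₗ[R] N →ₗ[R] R)
    (hmul : ∀ (a₁ a₂ : A) (n : N),
      dualDistrib R A A (TensorProduct.map p.flip p.flip (comul n)) (a₁ ⊗ₜ a₂) = p (a₁ * a₂) n)
    (a₁ a₂ : A) : toConv (p a₁) * toConv (p a₂) = toConv (p (a₁ * a₂)) :=
  WithConv.ext <| LinearMap.ext fun n =>
    (dualDistrib_map_apply_tmul p.flip p.flip _ a₁ a₂).symm.trans (hmul a₁ a₂ n)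

lemma pair_one_eq_counit {A : Type*} [Ring A] [Module R A] [Coalgebra R N]
    (p : A →ₗ[R] N →ₗ[R] R) (hnd : ∀ n : N, (∀ a : A, p a n = 0) → n = 0)
    (hmul : ∀ a₁ a₂ : A, toConv (p a₁) * toConv (p a₂) = toConv (p (a₁ * a₂))) :
    p 1 = counit := by
  ext n
  -- `n' = Σ ⟨1, n₍₁₎⟩ n₍₂₎` pairs with every `a` as `n` does, because `⟨1, ·⟩ ⋆ ⟨a, ·⟩ = ⟨a, ·⟩`.
  set n' := TensorProduct.lid R N (rTensor N (p 1) (comul n))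
  have hn' : n' = n := sub_eq_zero.mp <| hnd _ fun a => by
    rw [map_sub, apply_lid_rTensor_comul, hmul, one_mul]
    exact sub_self _
  have hone : (1 : WithConv (N →ₗ[R] R)) = toConv counit := by
    ext; simp
  calc p 1 n = (toConv (p 1) * 1) n := by rw [mul_one]
    _ = counit n' := by rw [hone, apply_lid_rTensor_comul]
    _ = counit n := by rw [hn']

end Convolution

section Antipode

variable {R A B : Type*} [CommRing R]

lemma toConv_lift_comp_mul_toConv_lift [Ring A] [Algebra R A] [Coalgebra R A]
    [AddCommGroup B] [Module R B] [Coalgebra R B] (SA : A →ₗ[R] A)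
    (hSA : ∀ a : A, mul' R A (rTensor A SA (comul a)) = counit (R := R) a • 1)
    (p : A →ₗ[R] B →ₗ[R] R)
    (hmul : ∀ a₁ a₂ : A, toConv (p a₁) * toConv (p a₂) = toConv (p (a₁ * a₂)))
    (hone : p 1 = counit) :
    toConv (TensorProduct.lift (p ∘ₗ SA)) * toConv (TensorProduct.lift p) = 1 := by
  refine WithConv.ext (TensorProduct.ext' fun a b => ?_)
  have hpair : ∀ s : A ⊗[R] A, dualDistrib R B B (TensorProduct.map (p ∘ₗ SA) p s) (comul b) =
      p (mul' R A (rTensor A SA s)) b := by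
    intro s
    induction s using TensorProduct.induction_on with
    | zero => simp
    | tmul x y =>
      rw [TensorProduct.map_tmul, dualDistrib_tmul_eq_mul'_comp_map, rTensor_tmul, mul'_apply]
      exact LinearMap.congr_fun (congrArg ofConv (hmul (SA x) y)) b
    | add u v hu hv => simp only [map_add, LinearMap.add_apply, hu, hv]
  rw [convMul_lift_tmul, hpair, hSA, map_smul, hone]
  simp [mul_comm]

lemma toConv_lift_mul_toConv_lift_compl₂ [AddCommGroup A] [Module R A] [Coalgebra R A]
    [Ring B] [Algebra R B] [Coalgebra R B] (SB : B →ₗ[R] B)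
    (hSB : ∀ b : B, mul' R B (lTensor B SB (comul b)) = counit (R := R) b • 1)
    (p : A →ₗ[R] B →ₗ[R] R)
    (hcomul : ∀ b₁ b₂ : B, toConv (p.flip b₁) * toConv (p.flip b₂) = toConv (p.flip (b₁ * b₂)))
    (hone : p.flip 1 = counit) :
    toConv (TensorProduct.lift p) * toConv (TensorProduct.lift (p.compl₂ SB)) = 1 := by
  refine WithConv.ext (TensorProduct.ext' fun a b => ?_)
  have hpair : ∀ t : B ⊗[R] B,
      dualDistrib R B B (TensorProduct.map p (p.compl₂ SB) (comul a)) t =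
        p a (mul' R B (lTensor B SB t)) := by
    intro t
    induction t using TensorProduct.induction_on with
    | zero => simp
    | tmul x y =>
      rw [dualDistrib_map_apply_tmul, lTensor_tmul, mul'_apply]
      exact LinearMap.congr_fun (congrArg ofConv (hcomul x (SB y))) a
    | add u v hu hv => simp only [map_add, hu, hv]
  rw [convMul_lift_tmul, hpair, hSB, map_smul, show p a 1 = p.flip 1 a from rfl, hone]
  simp

theorem pair_antipode_eq [Ring A] [Algebra R A] [Coalgebra R A] [Ring B] [Algebra R B]
    [Coalgebra R B] (SA : A →ₗ[R] A) (SB : B →ₗ[R] B)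
    (hSA : ∀ a : A, mul' R A (rTensor A SA (comul a)) = counit (R := R) a • 1)
    (hSB : ∀ b : B, mul' R B (lTensor B SB (comul b)) = counit (R := R) b • 1)
    (p : A →ₗ[R] B →ₗ[R] R) (hndA : ∀ a : A, (∀ b : B, p a b = 0) → a = 0)
    (hndB : ∀ b : B, (∀ a : A, p a b = 0) → b = 0)
    (hmul : ∀ a₁ a₂ : A, toConv (p a₁) * toConv (p a₂) = toConv (p (a₁ * a₂)))
    (hcomul : ∀ b₁ b₂ : B, toConv (p.flip b₁) * toConv (p.flip b₂) = toConv (p.flip (b₁ * b₂)))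
    (a : A) (b : B) : p (SA a) b = p a (SB b) := by
  have hleft := toConv_lift_comp_mul_toConv_lift SA hSA p hmul (pair_one_eq_counit p hndB hmul)
  have hright := toConv_lift_mul_toConv_lift_compl₂ SB hSB p hcomul
    (pair_one_eq_counit p.flip hndA hcomul)
  simpa using LinearMap.congr_fun (congrArg ofConv (left_inv_eq_right_inv hleft hright)) (a ⊗ₜ b)

end Antipode

end QD

namespace QD

variable {A B : Type*}
  [NormedRing A] [StarRing A] [CStarRing A] [NormedAlgebra ℂ A] [StarModule ℂ A]
  [FiniteDimensional ℂ A]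
  [NormedRing B] [StarRing B] [CStarRing B] [NormedAlgebra ℂ B] [StarModule ℂ B]
  [FiniteDimensional ℂ B]

theorem stmt_6_general (hA : FiniteHopfCStar A) (hB : FiniteHopfCStar B)
    (p : A →ₗ[ℂ] B →ₗ[ℂ] ℂ) (hnd : Nondegenerate p)
    (h1 : ∀ (a : A) (b₁ b₂ : B), pairT p (hA.comul a) (b₁ ⊗ₜ[ℂ] b₂) = p a (b₁ * b₂))
    (h2 : ∀ (a₁ a₂ : A) (b : B), pairT p.flip (hB.comul b) (a₁ ⊗ₜ[ℂ] a₂) = p (a₁ * a₂) b) :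
    ∀ (a : A) (b : B), p (hA.antipode a) b = p a (hB.antipode b) := by
  let := hA.toCoalgebra
  let := hB.toCoalgebra
  exact pair_antipode_eq hA.antipode hB.antipode hA.mul_antipode_rTensor_comul
    hB.mul_antipode_lTensor_comul p hnd.1 hnd.2 (toConv_mul_toConv_of_dualDistrib p h2)
    (toConv_mul_toConv_of_dualDistrib p.flip fun b₁ b₂ a => h1 a b₁ b₂)

/-- Remark 2.6 (2), second part: for a non-degenerate bilinear form satisfying the first
three pairing axioms, the antipode axiom follows automatically. -/
theorem stmt_6 (hA : FiniteHopfCStar A) (hB : FiniteHopfCStar B)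
    (p : A →ₗ[ℂ] B →ₗ[ℂ] ℂ) (hnd : Nondegenerate p)
    (h1 : ∀ (a : A) (b₁ b₂ : B), pairT p (hA.comul a) (b₁ ⊗ₜ[ℂ] b₂) = p a (b₁ * b₂))
    (h2 : ∀ (a₁ a₂ : A) (b : B), pairT p.flip (hB.comul b) (a₁ ⊗ₜ[ℂ] a₂) = p (a₁ * a₂) b)
    (h3 : ∀ (a : A) (b : B), p (star a) b = starRingEnd ℂ (p a (star (hB.antipode b)))) :
    ∀ (a : A) (b : B), p (hA.antipode a) b = p a (hB.antipode b) :=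
  stmt_6_general hA hB p hnd h1 h2
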